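/- Fix a prime ℓ. For distinct ν, ν' ∈ Part(n,ℓ), the images of ψ^co_ν and ψ^co_{ν'} in Part(n) are disjoint; that is, if Σ_{i≥0} ℓ^i·(λ^(ℓ^i))ᵗ = Σ_{i≥0} ℓ^i·(κ^(ℓ^i))ᵗ where λ^(ℓ^i) ∈ Part_ℓ(m_{ℓ^i}(ν)) and κ^(ℓ^i) ∈ Part_ℓ(m_{ℓ^i}(ν')), then ν = ν'. -/

import Mathlib

/-- A function `f : ℕ → ℕ` is a partition of `m` if it is weakly decreasing,
has finite support, and its parts sum to `m`.  Here `f i` is the `(i+1)`-st part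
`λ_{i+1}` of the partition. -/
def IsPartition (m : ℕ) (f : ℕ → ℕ) : Prop :=
  Antitone f ∧ (Function.support f).Finite ∧ ∑ᶠ i, f i = m

/-- The transpose partition: `ptranspose f j` is the `(j+1)`-st part `(fᵗ)_{j+1}`
of the transpose, i.e. the number of indices `i` with `f i ≥ j + 1`. -/
noncomputable def ptranspose (f : ℕ → ℕ) : ℕ → ℕ :=
  fun j => {i : ℕ | j + 1 ≤ f i}.ncard

/-- `pmult f j` is the multiplicity `m_j(f)` of `j ≥ 1` as a part of `f`. -/
noncomputable def pmult (f : ℕ → ℕ) (j : ℕ) : ℕ :=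
  {i : ℕ | f i = j}.ncard

/-- All (nonzero) parts of `f` are powers of `ℓ`. -/
def PartsPowersOf (ℓ : ℕ) (f : ℕ → ℕ) : Prop :=
  ∀ i, f i ≠ 0 → ∃ k, f i = ℓ ^ k

/-- `f` is `ℓ`-regular: every part `j ≥ 1` has multiplicity `< ℓ`. -/
def IsRegularPartition (ℓ : ℕ) (f : ℕ → ℕ) : Prop :=
  ∀ j, 1 ≤ j → pmult f j < ℓ

/-- The combinatorial generalized Springer map: given a tuple `lam` where `lam i`
is (meant to be) an `ℓ`-regular partition of `m_{ℓ^i}(ν)`, it returns the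
partition `Σ_{i ≥ 0} ℓ^i · (lam i)ᵗ` (componentwise operations). -/
noncomputable def psiCo (ℓ : ℕ) (lam : ℕ → ℕ → ℕ) : ℕ → ℕ :=
  fun j => ∑ᶠ i, ℓ ^ i * ptranspose (lam i) j

/-!
Successive differences of `Σᵢ ℓⁱ (λ⁽ⁱ⁾)ᵗ` are `Σᵢ ℓⁱ m_k(λ⁽ⁱ⁾)`, and since each `λ⁽ⁱ⁾` is
`ℓ`-regular these multiplicities are exactly the base-`ℓ` digits of the difference. So the image
determines every multiplicity of every `λ⁽ⁱ⁾`, hence the tuple `λ` itself, hence the sizes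
`|λ⁽ⁱ⁾| = m_{ℓⁱ}(ν)`; as `ν` has no parts other than powers of `ℓ`, this determines `ν`.
-/

open Finset

lemma eq_of_sum_pow_mul_eq {b N : ℕ} {a c : ℕ → ℕ} (ha : ∀ i, a i < b) (hc : ∀ i, c i < b)
    (h : ∑ i ∈ range N, b ^ i * a i = ∑ i ∈ range N, b ^ i * c i) : ∀ i < N, a i = c i := by
  induction N generalizing a c with
  | zero => simp
  | succ N ih =>
    have hb : 0 < b := (Nat.zero_le _).trans_lt (ha 0)
    have hsplit : ∀ d : ℕ → ℕ, ∑ i ∈ range (N + 1), b ^ i * d i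
        = d 0 + b * ∑ i ∈ range N, b ^ i * d (i + 1) := fun d => by
      rw [sum_range_succ', mul_sum]
      simp only [pow_succ, pow_zero, one_mul, add_comm, mul_assoc, mul_comm b]
    rw [hsplit, hsplit] at h
    have h0 : a 0 = c 0 := by
      simpa [Nat.add_mul_mod_self_left, Nat.mod_eq_of_lt (ha 0), Nat.mod_eq_of_lt (hc 0)]
        using congrArg (· % b) h
    rw [h0, Nat.add_left_cancel_iff, Nat.mul_left_cancel_iff hb] at h
    rintro (_ | i) hi
    · exact h0
    · exact ih (fun i => ha (i + 1)) (fun i => hc (i + 1)) h i (by omega)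

section Partitions

variable {f g : ℕ → ℕ}

lemma pmult_eq_zero_of_forall_ne {k : ℕ} (h : ∀ i, f i ≠ k) : pmult f k = 0 := by
  simp [pmult, h]

lemma IsPartition.eq_zero (h : IsPartition 0 f) : f = 0 := by
  obtain ⟨-, hfs, hsum⟩ := h
  rw [finsum_eq_sum f hfs, sum_eq_zero_iff] at hsum
  funext i
  by_contra hi
  exact hi (hsum i (hfs.mem_toFinset.2 hi))

lemma finite_setOf_le (hfs : f.support.Finite) (j : ℕ) : {i | j + 1 ≤ f i}.Finite :=
  hfs.subset fun i (hi : j + 1 ≤ f i) => Nat.ne_zero_of_lt hi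

@[simp]
lemma ptranspose_zero : ptranspose 0 = 0 := by
  funext j
  simp [ptranspose]

lemma ptranspose_eq_zero_of_le {j : ℕ} (h : ∀ i, f i ≤ j) : ptranspose f j = 0 := by
  simp [ptranspose, fun i => Nat.not_lt.2 (h i)]

lemma ptranspose_eq_pmult_add (hfs : f.support.Finite) (j : ℕ) :
    ptranspose f j = pmult f (j + 1) + ptranspose f (j + 1) := by
  have hunion : {i | j + 1 ≤ f i} = {i | f i = j + 1} ∪ {i | j + 1 + 1 ≤ f i} := by
    ext i
    show j + 1 ≤ f i ↔ f i = j + 1 ∨ j + 1 + 1 ≤ f i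
    omega
  have hdisj : Disjoint {i | f i = j + 1} {i | j + 1 + 1 ≤ f i} :=
    Set.disjoint_left.2 fun i (hi : f i = j + 1) (hi' : j + 1 + 1 ≤ f i) => by omega
  rw [ptranspose, hunion, Set.ncard_union_eq hdisj
    ((finite_setOf_le hfs j).subset fun i (hi : f i = j + 1) => hi.ge) (finite_setOf_le hfs _)]
  rfl

lemma setOf_le_eq_Iio_ptranspose (hf : Antitone f) (hfs : f.support.Finite) (j : ℕ) :
    {i | j + 1 ≤ f i} = Set.Iio (ptranspose f j) := by
  have hlower : IsLowerSet {i | j + 1 ≤ f i} := fun _ _ hba ha => le_trans ha (hf hba)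
  obtain huniv | ⟨a, ha⟩ := hlower.eq_univ_or_Iio
  · exact absurd (huniv ▸ finite_setOf_le hfs j) Set.infinite_univ
  · rw [ptranspose, ha, Set.ncard_Iio_nat]

lemma lt_ptranspose_iff (hf : Antitone f) (hfs : f.support.Finite) (i j : ℕ) :
    i < ptranspose f j ↔ j < f i := by
  rw [← Set.mem_Iio, ← setOf_le_eq_Iio_ptranspose hf hfs]
  rfl

lemma eq_of_ptranspose_eq (hf : Antitone f) (hfs : f.support.Finite) (hg : Antitone g)
    (hgs : g.support.Finite) (h : ptranspose f = ptranspose g) : f = g :=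
  funext fun i => eq_of_forall_lt_iff fun j => by
    rw [← lt_ptranspose_iff hf hfs, ← lt_ptranspose_iff hg hgs, h]

lemma ptranspose_eq_of_pmult_eq {N : ℕ} (hfs : f.support.Finite) (hgs : g.support.Finite)
    (hfN : ∀ i, f i ≤ N) (hgN : ∀ i, g i ≤ N) (h : ∀ k, 1 ≤ k → pmult f k = pmult g k) :
    ptranspose f = ptranspose g := by
  suffices ∀ d j, N ≤ j + d → ptranspose f j = ptranspose g j from
    funext fun j => this N j (Nat.le_add_left N j)
  intro d
  induction d with
  | zero =>
    intro j (hj : N ≤ j)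
    rw [ptranspose_eq_zero_of_le fun i => (hfN i).trans hj,
      ptranspose_eq_zero_of_le fun i => (hgN i).trans hj]
  | succ d ih =>
    intro j hj
    rw [ptranspose_eq_pmult_add hfs, ptranspose_eq_pmult_add hgs, h _ (Nat.le_add_left 1 j),
      ih (j + 1) (by omega)]

lemma eq_of_pmult_eq (hf : Antitone f) (hfs : f.support.Finite) (hg : Antitone g)
    (hgs : g.support.Finite) (h : ∀ k, 1 ≤ k → pmult f k = pmult g k) : f = g :=
  eq_of_ptranspose_eq hf hfs hg hgs <| ptranspose_eq_of_pmult_eq (N := max (f 0) (g 0)) hfs hgs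
    (fun i => (hf (Nat.zero_le i)).trans (le_max_left _ _))
    (fun i => (hg (Nat.zero_le i)).trans (le_max_right _ _)) h

end Partitions

section PsiCo

variable {ℓ M : ℕ} {lam kap : ℕ → ℕ → ℕ}

lemma psiCo_eq_sum (hM : ∀ i, M ≤ i → lam i = 0) (j : ℕ) :
    psiCo ℓ lam j = ∑ i ∈ range M, ℓ ^ i * ptranspose (lam i) j := by
  refine finsum_eq_sum_of_support_subset _ fun i hi => ?_
  by_contra hiM
  simp [hM i (by simpa using hiM)] at hi

lemma psiCo_eq_sum_pmult_add (hM : ∀ i, M ≤ i → lam i = 0) (hfs : ∀ i, (lam i).support.Finite)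
    (j : ℕ) :
    psiCo ℓ lam j = ∑ i ∈ range M, ℓ ^ i * pmult (lam i) (j + 1) + psiCo ℓ lam (j + 1) := by
  rw [psiCo_eq_sum hM, psiCo_eq_sum hM, ← sum_add_distrib]
  exact sum_congr rfl fun i _ => by rw [ptranspose_eq_pmult_add (hfs i), mul_add]

lemma eq_of_psiCo_eq (hlamM : ∀ i, M ≤ i → lam i = 0) (hkapM : ∀ i, M ≤ i → kap i = 0)
    (hlam : ∀ i, Antitone (lam i)) (hlams : ∀ i, (lam i).support.Finite)
    (hlamr : ∀ i, IsRegularPartition ℓ (lam i))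
    (hkap : ∀ i, Antitone (kap i)) (hkaps : ∀ i, (kap i).support.Finite)
    (hkapr : ∀ i, IsRegularPartition ℓ (kap i)) (heq : psiCo ℓ lam = psiCo ℓ kap) :
    lam = kap := by
  have hdigits : ∀ k, 1 ≤ k → ∀ i, pmult (lam i) k = pmult (kap i) k := by
    intro k hk i
    obtain ⟨j, rfl⟩ : ∃ j, k = j + 1 := ⟨k - 1, by omega⟩
    have hsum : ∑ i ∈ range M, ℓ ^ i * pmult (lam i) (j + 1)
        = ∑ i ∈ range M, ℓ ^ i * pmult (kap i) (j + 1) := by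
      have hl := psiCo_eq_sum_pmult_add (ℓ := ℓ) hlamM hlams j
      have hk := psiCo_eq_sum_pmult_add (ℓ := ℓ) hkapM hkaps j
      rw [heq] at hl
      omega
    rcases lt_or_ge i M with hi | hi
    · exact eq_of_sum_pow_mul_eq (fun i => hlamr i _ hk) (fun i => hkapr i _ hk) hsum i hi
    · rw [hlamM i hi, hkapM i hi]
  funext i
  exact eq_of_pmult_eq (hlam i) (hlams i) (hkap i) (hkaps i) fun k hk => hdigits k hk i

lemma eq_zero_of_isPartition_pmult_pow {ν t : ℕ → ℕ} {i : ℕ} (hℓ : 1 < ℓ) (hν : Antitone ν)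
    (ht : IsPartition (pmult ν (ℓ ^ i)) t) (hi : ν 0 < i) : t = 0 := by
  rw [pmult_eq_zero_of_forall_ne fun x =>
    ((hν (Nat.zero_le x)).trans_lt (hi.trans (Nat.lt_pow_self hℓ))).ne] at ht
  exact ht.eq_zero

end PsiCo

/-- For distinct `ν, ν' ∈ Part(n,ℓ)`, the images of `ψ^co_ν` and `ψ^co_{ν'}`
are disjoint: if `Σ_i ℓ^i·(lam i)ᵗ = Σ_i ℓ^i·(kap i)ᵗ`, where `lam i` is an
`ℓ`-regular partition of `m_{ℓ^i}(ν)` and `kap i` is an `ℓ`-regular partition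
of `m_{ℓ^i}(ν')`, then `ν = ν'`. -/
theorem psiCo_images_disjoint (ℓ n : ℕ) (hℓ : ℓ.Prime)
    (ν ν' : ℕ → ℕ)
    (hν : IsPartition n ν) (hpow : PartsPowersOf ℓ ν)
    (hν' : IsPartition n ν') (hpow' : PartsPowersOf ℓ ν')
    (lam kap : ℕ → ℕ → ℕ)
    (hlam : ∀ i, IsPartition (pmult ν (ℓ ^ i)) (lam i) ∧ IsRegularPartition ℓ (lam i))
    (hkap : ∀ i, IsPartition (pmult ν' (ℓ ^ i)) (kap i) ∧ IsRegularPartition ℓ (kap i))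
    (heq : psiCo ℓ lam = psiCo ℓ kap) :
    ν = ν' := by
  have hlk : lam = kap := eq_of_psiCo_eq (M := ν 0 + ν' 0 + 1)
    (fun i hi => eq_zero_of_isPartition_pmult_pow hℓ.one_lt hν.1 (hlam i).1 (by omega))
    (fun i hi => eq_zero_of_isPartition_pmult_pow hℓ.one_lt hν'.1 (hkap i).1 (by omega))
    (fun i => (hlam i).1.1) (fun i => (hlam i).1.2.1) (fun i => (hlam i).2)
    (fun i => (hkap i).1.1) (fun i => (hkap i).1.2.1) (fun i => (hkap i).2) heq
  refine eq_of_pmult_eq hν.1 hν.2.1 hν'.1 hν'.2.1 fun k hk => ?_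
  by_cases hk_pow : ∃ m, k = ℓ ^ m
  · obtain ⟨m, rfl⟩ := hk_pow
    rw [← (hlam m).1.2.2, ← (hkap m).1.2.2, hlk]
  · have hnot_part : ∀ μ : ℕ → ℕ, PartsPowersOf ℓ μ → ∀ x, μ x ≠ k := fun μ hμ x hx => by
      obtain ⟨m, hm⟩ := hμ x (by omega)
      exact hk_pow ⟨m, hx ▸ hm⟩
    rw [pmult_eq_zero_of_forall_ne (hnot_part ν hpow),
      pmult_eq_zero_of_forall_ne (hnot_part ν' hpow')]
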